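/- arXiv:2507.17854 — 2 statements merged into one kernel-verified Lean document; each statement's English description precedes it below -/
import Mathlib

section
/- Let L(X) be the free Lie algebra on a set X over a field, let S ⊆ X, and let 𝔞 be the ideal of L(X) generated by X \ S. Then L(X) is, as a vector space, the internal direct sum of the Lie subalgebra generated by S and the ideal 𝔞. -/
/-!
The Lie morphism `π : L(X) → ⟨S⟩` sending `x ∈ S` to itself and the other generators to `0`
is the identity on the subalgebra `⟨S⟩`, so `L(X) = ⟨S⟩ ⊕ ker π` as modules. Its kernel contains
the ideal `𝔞` generated by `X \ S`, and conversely modulo `𝔞` the map `π` agrees with the identity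
on generators, hence everywhere, so `ker π ⊆ 𝔞`.
-/

open FreeLieAlgebra

namespace LieIdeal

variable {R L : Type*} [CommRing R] [LieRing L] [LieAlgebra R L] (I : LieIdeal R L)

def mkLieHom : L →ₗ⁅R⁆ L ⧸ I :=
  { (LieSubmodule.Quotient.mk' I : L →ₗ[R] L ⧸ I) with map_lie' := rfl }

lemma mkLieHom_eq_zero_iff {x : L} : I.mkLieHom x = 0 ↔ x ∈ I :=
  LieSubmodule.Quotient.mk_eq_zero'

end LieIdeal

namespace FreeLieAlgebra

variable (R : Type*) [CommRing R] {X : Type*} (S : Set X)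

noncomputable def eliminate : FreeLieAlgebra R X →ₗ⁅R⁆ LieSubalgebra.lieSpan R _ (of R '' S) :=
  open scoped Classical in
  lift R fun x => if hx : x ∈ S then ⟨of R x, LieSubalgebra.subset_lieSpan ⟨x, hx, rfl⟩⟩ else 0

variable {R S}

lemma eliminate_of_mem {x : X} (hx : x ∈ S) :
    (eliminate R S (of R x) : FreeLieAlgebra R X) = of R x := by
  simp [eliminate, hx]

lemma eliminate_of_notMem {x : X} (hx : x ∉ S) : eliminate R S (of R x) = 0 := by
  simp [eliminate, hx]

lemma eliminate_apply_coe (a : LieSubalgebra.lieSpan R (FreeLieAlgebra R X) (of R '' S)) :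
    eliminate R S a = a := by
  obtain ⟨a, ha⟩ := a
  rw [Subtype.ext_iff]
  induction ha using LieSubalgebra.lieSpan_induction with
  | mem _ h => obtain ⟨x, hx, rfl⟩ := h; exact eliminate_of_mem hx
  | zero => simp
  | add _ _ _ _ h₁ h₂ => simp_all
  | smul _ _ _ h => simp_all
  | lie _ _ _ _ h₁ h₂ => simp_all

variable (R S)

lemma mkLieHom_comp_eliminate :
    (LieIdeal.mkLieHom (LieSubmodule.lieSpan R _ (of R '' Sᶜ))).comp
      ((LieSubalgebra.lieSpan R _ (of R '' S)).incl.comp (eliminate R S)) =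
    LieIdeal.mkLieHom (LieSubmodule.lieSpan R (FreeLieAlgebra R X) (of R '' Sᶜ)) := by
  refine hom_ext fun x => ?_
  by_cases hx : x ∈ S
  · simp [eliminate_of_mem hx]
  · simpa [eliminate_of_notMem hx, eq_comm (a := (0 : _ ⧸ _)), LieIdeal.mkLieHom_eq_zero_iff]
      using LieSubmodule.subset_lieSpan (R := R) (L := FreeLieAlgebra R X)
        (Set.mem_image_of_mem _ hx)

lemma ker_eliminate :
    (eliminate R S).ker = LieSubmodule.lieSpan R (FreeLieAlgebra R X) (of R '' Sᶜ) := by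
  refine le_antisymm (fun a ha => ?_) (LieSubmodule.lieSpan_le.2 ?_)
  · rw [LieHom.mem_ker] at ha
    rw [← LieIdeal.mkLieHom_eq_zero_iff, ← mkLieHom_comp_eliminate]
    simp [ha]
  · rintro _ ⟨x, hx, rfl⟩
    exact eliminate_of_notMem hx

end FreeLieAlgebra

/-- Elimination theorem, part (a): for `S ⊆ X`, the free Lie algebra `L(X)` is,
as a vector space, the internal direct sum of the Lie subalgebra generated by `S`
and the ideal generated by `X \ S`. -/
theorem free_lie_algebra_elimination_direct_sum (K : Type*) [Field K] {X : Type*}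
    (S : Set X) :
    IsCompl
      (LieSubalgebra.lieSpan K (FreeLieAlgebra K X) (of K '' S)).toSubmodule
      (LieSubmodule.lieSpan K (FreeLieAlgebra K X) (of K '' Sᶜ) :
        LieIdeal K (FreeLieAlgebra K X)).toSubmodule := by
  rw [← ker_eliminate, LieHom.ker_toSubmodule]
  exact LinearMap.isCompl_of_proj eliminate_apply_coe
end

section
/- Let L(X) be the free Lie algebra on a set X over a field, S ⊆ X, and T the set of finite sequences (s₁, …, sₙ, x) with n ≥ 0, sᵢ ∈ S, and x ∈ X \ S. Then the map sending (s₁, …, sₙ, x) to ad(s₁)⋯ad(sₙ)(x) extends to a Lie algebra isomorphism from the free Lie algebra L(T) onto the ideal 𝔞 of L(X) generated by X \ S. -/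
/-!
For `s ∈ S` let `d_s` be the derivation of `L(T)` that prepends `s` to a generator. The `d_s`
define an action of `L(S)` on `L(T)` by derivations, and `s ↦ s`, `x ↦ ([], x)` extends to a
homomorphism `L(X) → L(T) ⋊ L(S)` whose composite with `ψ` is the inclusion of `L(T)`; hence `ψ`
is injective. Since `ψ ∘ d_s = ad(s) ∘ ψ`, every generator of `L(X)` normalizes the range of `ψ`,
so this range is an ideal; it contains `X \ S` and lies in the ideal generated by `X \ S`.
-/

def AbelianLieAlgebra (M : Type*) : Type _ := M

namespace AbelianLieAlgebra

variable {R L M : Type*} [CommRing R] [LieRing L] [LieAlgebra R L]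
  [AddCommGroup M] [Module R M] [LieRingModule L M] [LieModule R L M]

instance : AddCommGroup (AbelianLieAlgebra M) := inferInstanceAs (AddCommGroup M)

instance : Module R (AbelianLieAlgebra M) := inferInstanceAs (Module R M)

instance : LieRing (AbelianLieAlgebra M) where
  bracket _ _ := 0
  add_lie _ _ _ := (add_zero 0).symm
  lie_add _ _ _ := (add_zero 0).symm
  lie_self _ := rfl
  leibniz_lie _ _ _ := (add_zero 0).symm

instance : LieAlgebra R (AbelianLieAlgebra M) := ⟨fun t _ _ => (smul_zero t).symm⟩

@[simp] lemma lie_eq_zero (m n : AbelianLieAlgebra M) : ⁅m, n⁆ = 0 := rfl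

variable (R L M) in
def actionHom : L →ₗ⁅R⁆ LieDerivation R (AbelianLieAlgebra M) (AbelianLieAlgebra M) where
  toFun x :=
    { toLinearMap := (LieModule.toEnd R L M x : M →ₗ[R] M)
      leibniz' _ _ := (lie_zero (M := M) x).trans (sub_self 0).symm }
  map_add' x y := by ext m; exact add_lie (M := M) x y m
  map_smul' t x := by ext m; exact smul_lie (M := M) t x m
  map_lie' {x y} := by ext m; exact lie_lie (M := M) x y m

end AbelianLieAlgebra

namespace FreeLieAlgebra

open LieAlgebra LieSubalgebra

variable {R X : Type*} [CommRing R]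

lemma lieSpan_range_of : lieSpan R (FreeLieAlgebra R X) (Set.range (of R)) = ⊤ := by
  let H := lieSpan R (FreeLieAlgebra R X) (Set.range (of R))
  let j : FreeLieAlgebra R X →ₗ⁅R⁆ H := lift R fun x => ⟨of R x, subset_lieSpan ⟨x, rfl⟩⟩
  have hj : H.incl.comp j = LieHom.id := hom_ext fun x => by simp [j]
  refine eq_top_iff.mpr fun a _ => ?_
  have hja : H.incl (j a) = a := LieHom.congr_fun hj a
  exact hja ▸ (j a).2

@[elab_as_elim]
theorem induction_on {p : FreeLieAlgebra R X → Prop} (a : FreeLieAlgebra R X)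
    (of : ∀ x, p (of R x)) (zero : p 0) (add : ∀ a b, p a → p b → p (a + b))
    (smul : ∀ (t : R) a, p a → p (t • a)) (lie : ∀ a b, p a → p b → p ⁅a, b⁆) : p a := by
  have ha : a ∈ lieSpan R (FreeLieAlgebra R X) (Set.range (FreeLieAlgebra.of R)) :=
    lieSpan_range_of (R := R) ▸ LieSubalgebra.mem_top a
  induction ha using lieSpan_induction with
  | mem _ hx => obtain ⟨x, rfl⟩ := hx; exact of x
  | zero => exact zero
  | add _ _ _ _ ha hb => exact add _ _ ha hb
  | smul t _ _ ha => exact smul t _ ha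
  | lie _ _ _ _ ha hb => exact lie _ _ ha hb

section LiftLieDerivation

variable {M : Type*} [AddCommGroup M] [Module R M] [LieRingModule (FreeLieAlgebra R X) M]
  [LieModule R (FreeLieAlgebra R X) M]

variable (R) in
/-- The graph `a ↦ (D a, a)` of the derivation `D` extending `f`, as a homomorphism into the
trivial extension of `L(X)` by `M`; it exists by freeness, and then `D` is read off from it. -/
noncomputable def liftDerivationGraph (f : X → M) :
    FreeLieAlgebra R X →ₗ⁅R⁆
      AbelianLieAlgebra M ⋊⁅AbelianLieAlgebra.actionHom R (FreeLieAlgebra R X) M⁆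
        FreeLieAlgebra R X :=
  lift R fun x => ⟨f x, of R x⟩

lemma right_liftDerivationGraph (f : X → M) (a : FreeLieAlgebra R X) :
    (liftDerivationGraph R f a).right = a := by
  have h : (SemiDirectSum.projr _).comp (liftDerivationGraph R f) = LieHom.id :=
    hom_ext fun x => by simp [liftDerivationGraph]
  exact LieHom.congr_fun h a

variable (R) in
noncomputable def liftLieDerivation (f : X → M) : LieDerivation R (FreeLieAlgebra R X) M where
  toFun a := (liftDerivationGraph R f a).left
  map_add' a b := by rw [map_add]; rfl
  map_smul' t a := by rw [map_smul]; rfl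
  leibniz' a b := by
    change (liftDerivationGraph R f ⁅a, b⁆).left = _
    rw [LieHom.map_lie, SemiDirectSum.lie_eq_mk, right_liftDerivationGraph,
      right_liftDerivationGraph, AbelianLieAlgebra.lie_eq_zero, zero_add]
    rfl

@[simp] lemma liftLieDerivation_of (f : X → M) (x : X) :
    liftLieDerivation R f (of R x) = f x := by
  change (liftDerivationGraph R f (of R x)).left = f x
  rw [liftDerivationGraph, lift_of_apply]

end LiftLieDerivation

section Elimination

variable (R) (S : Set X)

noncomputable def eliminationMap : FreeLieAlgebra R (List S × ↥Sᶜ) →ₗ⁅R⁆ FreeLieAlgebra R X :=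
  lift R fun t => (t.1.map Subtype.val).foldr (fun s b => ⁅of R s, b⁆) (of R (t.2 : X))

lemma eliminationMap_of (t : List S × ↥Sᶜ) :
    eliminationMap R S (of R t) =
      (t.1.map Subtype.val).foldr (fun s b => ⁅of R s, b⁆) (of R (t.2 : X)) :=
  lift_of_apply _ _

lemma eliminationMap_of_nil (x : ↥Sᶜ) : eliminationMap R S (of R ([], x)) = of R (x : X) :=
  eliminationMap_of R S _

lemma eliminationMap_of_cons (s : S) (l : List S) (x : ↥Sᶜ) :
    eliminationMap R S (of R (s :: l, x)) = ⁅of R (s : X), eliminationMap R S (of R (l, x))⁆ := by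
  simp only [eliminationMap_of, List.map_cons, List.foldr_cons]

lemma eliminationMap_mem_lieSpan (a : FreeLieAlgebra R (List S × ↥Sᶜ)) :
    eliminationMap R S a ∈ LieSubmodule.lieSpan R (FreeLieAlgebra R X) (of R '' Sᶜ) := by
  induction a using induction_on with
  | of t =>
    obtain ⟨l, x⟩ := t
    induction l with
    | nil => exact LieSubmodule.subset_lieSpan ⟨x, x.2, (eliminationMap_of_nil R S x).symm⟩
    | cons s l ih => exact eliminationMap_of_cons R S s l x ▸ LieSubmodule.lie_mem _ ih
  | zero => simp
  | add a b ha hb => simpa using add_mem ha hb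
  | smul t a ha => simpa using SMulMemClass.smul_mem t ha
  | lie a b _ hb => simpa using LieSubmodule.lie_mem _ hb

noncomputable def prependDerivation (s : S) :
    LieDerivation R (FreeLieAlgebra R (List S × ↥Sᶜ)) (FreeLieAlgebra R (List S × ↥Sᶜ)) :=
  liftLieDerivation R fun t => of R (s :: t.1, t.2)

lemma eliminationMap_prependDerivation (s : S) (a : FreeLieAlgebra R (List S × ↥Sᶜ)) :
    eliminationMap R S (prependDerivation R S s a) = ⁅of R (s : X), eliminationMap R S a⁆ := by
  induction a using induction_on with
  | of t => simp [prependDerivation, eliminationMap_of_cons]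
  | zero => simp
  | add a b ha hb => simp [ha, hb]
  | smul t a ha => simp [ha]
  | lie a b ha hb =>
    rw [LieDerivation.apply_lie_eq_add, map_add, LieHom.map_lie, LieHom.map_lie, ha, hb,
      LieHom.map_lie, leibniz_lie (of R (s : X)), add_comm]

noncomputable def prependAction :
    FreeLieAlgebra R S →ₗ⁅R⁆
      LieDerivation R (FreeLieAlgebra R (List S × ↥Sᶜ)) (FreeLieAlgebra R (List S × ↥Sᶜ)) :=
  lift R (prependDerivation R S)

open Classical in
noncomputable def eliminationRetraction :
    FreeLieAlgebra R X →ₗ⁅R⁆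
      FreeLieAlgebra R (List S × ↥Sᶜ) ⋊⁅prependAction R S⁆ FreeLieAlgebra R S :=
  lift R fun x => if hx : x ∈ S then ⟨0, of R ⟨x, hx⟩⟩ else ⟨of R ([], ⟨x, hx⟩), 0⟩

lemma eliminationRetraction_eliminationMap (a : FreeLieAlgebra R (List S × ↥Sᶜ)) :
    eliminationRetraction R S (eliminationMap R S a) = SemiDirectSum.inl _ a := by
  suffices (eliminationRetraction R S).comp (eliminationMap R S) = SemiDirectSum.inl _ from
    LieHom.congr_fun this a
  refine hom_ext fun ⟨l, x⟩ => ?_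
  induction l with
  | nil =>
    rw [LieHom.comp_apply, eliminationMap_of_nil, eliminationRetraction, lift_of_apply,
      dif_neg x.2]
    rfl
  | cons s l ih =>
    rw [LieHom.comp_apply] at ih ⊢
    rw [eliminationMap_of_cons, LieHom.map_lie, ih, eliminationRetraction, lift_of_apply,
      dif_pos s.2]
    simp only [SemiDirectSum.inl_eq_mk, SemiDirectSum.lie_eq_mk]
    simp [prependAction, prependDerivation]

lemma eliminationMap_injective : Function.Injective (eliminationMap R S) := fun a b h =>
  SemiDirectSum.inl_injective _ <| by
    rw [← eliminationRetraction_eliminationMap, h, eliminationRetraction_eliminationMap]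

lemma normalizer_range_eliminationMap : (eliminationMap R S).range.normalizer = ⊤ := by
  rw [eq_top_iff, ← lieSpan_range_of, lieSpan_le]
  rintro _ ⟨x, rfl⟩
  rw [SetLike.mem_coe, mem_normalizer_iff]
  intro z hz
  obtain ⟨a, rfl⟩ := (LieHom.mem_range _ z).mp hz
  by_cases hx : x ∈ S
  · exact ⟨prependDerivation R S ⟨x, hx⟩ a, eliminationMap_prependDerivation R S ⟨x, hx⟩ a⟩
  · rw [← eliminationMap_of_nil R S ⟨x, hx⟩, ← LieHom.map_lie]
    exact LieHom.mem_range_self _ _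

theorem range_eliminationMap :
    (eliminationMap R S).range.toSubmodule =
      (LieSubmodule.lieSpan R (FreeLieAlgebra R X) (of R '' Sᶜ) :
        LieIdeal R (FreeLieAlgebra R X)).toSubmodule := by
  let J : LieIdeal R (FreeLieAlgebra R X) :=
    { (eliminationMap R S).range.toSubmodule with
      lie_mem := fun {y _} hz =>
        ideal_in_normalizer (normalizer_range_eliminationMap R S ▸ mem_top y) hz }
  change J.toSubmodule = _
  congr 1
  apply le_antisymm
  · rintro _ ⟨a, rfl⟩
    exact eliminationMap_mem_lieSpan R S a
  · rw [LieSubmodule.lieSpan_le]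
    rintro _ ⟨x, hx, rfl⟩
    exact ⟨of R ([], ⟨x, hx⟩), eliminationMap_of_nil R S ⟨x, hx⟩⟩

end Elimination

end FreeLieAlgebra

open FreeLieAlgebra

/-- Elimination theorem, part (b): with `S ⊆ X` and `T` the set of sequences
`(s₁, …, sₙ, x)` with `sᵢ ∈ S` and `x ∈ X \ S`, the map
`(s₁, …, sₙ, x) ↦ ad(s₁)⋯ad(sₙ)(x)` extends to an isomorphism of Lie algebras
from `L(T)` onto the ideal `𝔞` of `L(X)` generated by `X \ S`. -/
theorem free_lie_algebra_elimination_ideal_free (K : Type*) [Field K] {X : Type*}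
    (S : Set X) :
    ∃ ψ : FreeLieAlgebra K (List ↥S × ↥Sᶜ) →ₗ⁅K⁆ FreeLieAlgebra K X,
      Function.Injective ψ ∧
      (ψ.range.toSubmodule =
        (LieSubmodule.lieSpan K (FreeLieAlgebra K X) (of K '' Sᶜ) :
          LieIdeal K (FreeLieAlgebra K X)).toSubmodule) ∧
      ∀ t : List ↥S × ↥Sᶜ,
        ψ (of K t) =
          (t.1.map Subtype.val).foldr (fun s b => ⁅of K s, b⁆) (of K (t.2 : X)) :=
  ⟨eliminationMap K S, eliminationMap_injective K S, range_eliminationMap K S,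
    eliminationMap_of K S⟩
end
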